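/- arXiv:2511.01938 — 5 statements merged into one kernel-verified Lean document; each statement's English description precedes it below -/
import Mathlib

section
/- Let F : ℝ^d → ℝ^{km} be continuously differentiable, let y ∈ ℝ^{km}, define L(θ) = ‖F(θ) − y‖², L_λ(θ) = L(θ) + λ‖θ‖² for λ > 0, Z = {θ : L(θ) = 0}, and dist_Z(θ) = inf_{φ∈Z} ‖θ − φ‖. Then for every θ₀ ∈ Z and every ε > 0, there exists λ_ε > 0 such that for all 0 < λ < λ_ε, every differentiable trajectory θ : [0,∞) → ℝ^d with θ(0) = θ₀ and θ′(t) = −∇L_λ(θ(t)) for all t ≥ 0 satisfies sup_{t ≥ 0} dist_Z(θ(t)) < ε. -/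
/-!
Along the gradient flow of `L_λ` the value `L_λ(θ(t))` does not increase, and at `θ₀ ∈ Z` it equals
`λ‖θ₀‖²`. Hence the trajectory stays in the ball of radius `‖θ₀‖` and `L(θ(t)) ≤ λ‖θ₀‖²`. On that
compact ball, `L` is bounded below by some `δ > 0` wherever the distance to its zero set `Z` is at
least `ε / 2`, so `λ‖θ₀‖² < δ` keeps the whole trajectory within `ε / 2` of `Z`.
-/

open Metric Set

theorem antitoneOn_comp_of_hasDerivAt_neg_gradient {E : Type*} [NormedAddCommGroup E]
    [InnerProductSpace ℝ E] [CompleteSpace E] {f : E → ℝ} (hf : Differentiable ℝ f)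
    {γ : ℝ → E} (hγ : ∀ t, 0 ≤ t → HasDerivAt γ (-gradient f (γ t)) t) :
    AntitoneOn (f ∘ γ) (Ici 0) := by
  have hderiv : ∀ t, 0 ≤ t → HasDerivAt (f ∘ γ) (-‖gradient f (γ t)‖ ^ 2) t := fun t ht => by
    simpa only [InnerProductSpace.toDual_apply_apply, inner_neg_right,
      real_inner_self_eq_norm_sq] using
      (hf (γ t)).hasGradientAt.hasFDerivAt.comp_hasDerivAt t (hγ t ht)
  refine antitoneOn_of_hasDerivWithinAt_nonpos (convex_Ici 0)
    (fun t ht => (hderiv t ht).continuousAt.continuousWithinAt)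
    (fun t ht => (hderiv t (interior_subset ht)).hasDerivWithinAt) fun t _ => ?_
  exact neg_nonpos.mpr (sq_nonneg _)

theorem IsCompact.exists_pos_forall_infDist_lt_of_norm_lt {α E : Type*} [MetricSpace α]
    [NormedAddCommGroup E] {f : α → E} (hf : Continuous f) {K : Set α} (hK : IsCompact K)
    {ε : ℝ} (hε : 0 < ε) :
    ∃ δ > 0, ∀ x ∈ K, ‖f x‖ < δ → infDist x (f ⁻¹' {0}) < ε := by
  have hfar : IsCompact (K ∩ {x | ε ≤ infDist x (f ⁻¹' {0})}) :=
    hK.inter_right (isClosed_le continuous_const (continuous_infDist_pt _))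
  have hpos : ∀ x ∈ K ∩ {x | ε ≤ infDist x (f ⁻¹' {0})}, 0 < ‖f x‖ := by
    rintro x ⟨-, hx⟩
    refine norm_pos_iff.mpr fun hfx => ?_
    rw [mem_ofPred_eq, infDist_zero_of_mem (show x ∈ f ⁻¹' {0} from hfx)] at hx
    exact hx.not_gt hε
  obtain ⟨δ, hδ, hδle⟩ := hfar.exists_forall_le' hf.norm.continuousOn hpos
  refine ⟨δ, hδ, fun x hxK hfx => ?_⟩
  by_contra! hx
  exact (hδle x ⟨hxK, hx⟩).not_gt hfx

/-- **Stability of the zero-loss set.** For every initialization in the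
zero-loss set `Z` and every `ε > 0`, there is `λ_ε > 0` such that for all `0 < λ < λ_ε`,
every gradient-flow trajectory of the regularized loss `L_λ` starting there satisfies
`sup_{t ≥ 0} dist_Z(θ(t)) < ε` (expressed as: some bound `c < ε` dominates all distances). -/
theorem stmt_1 (d km : ℕ)
    (F : EuclideanSpace ℝ (Fin d) → EuclideanSpace ℝ (Fin km))
    (hF : ContDiff ℝ 1 F)
    (y : EuclideanSpace ℝ (Fin km))
    (L : EuclideanSpace ℝ (Fin d) → ℝ)
    (hLdef : ∀ θ, L θ = ‖F θ - y‖ ^ 2)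
    (Lreg : ℝ → EuclideanSpace ℝ (Fin d) → ℝ)
    (hLregdef : ∀ lam θ, Lreg lam θ = L θ + lam * ‖θ‖ ^ 2)
    (Z : Set (EuclideanSpace ℝ (Fin d)))
    (hZ : Z = {ψ | L ψ = 0})
    (θ₀ : EuclideanSpace ℝ (Fin d)) (hθ₀ : θ₀ ∈ Z)
    (ε : ℝ) (hε : 0 < ε) :
    ∃ lamε > (0 : ℝ), ∀ lam : ℝ, 0 < lam → lam < lamε →
      ∀ θ : ℝ → EuclideanSpace ℝ (Fin d), θ 0 = θ₀ →
        (∀ t : ℝ, 0 ≤ t → HasDerivAt θ (-(gradient (Lreg lam) (θ t))) t) →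
        ∃ c : ℝ, c < ε ∧ ∀ t : ℝ, 0 ≤ t → Metric.infDist (θ t) Z ≤ c := by
  subst hZ
  have hL : L = fun ψ => ‖F ψ - y‖ ^ 2 := funext hLdef
  have hL_nonneg : ∀ ψ, 0 ≤ L ψ := fun ψ => hL ▸ sq_nonneg _
  have hL_C1 : ContDiff ℝ 1 L := hL ▸ (hF.sub contDiff_const).norm_sq ℝ
  set S := ‖θ₀‖
  obtain ⟨δ, hδ, hclose⟩ := (isCompact_closedBall (0 : EuclideanSpace ℝ (Fin d)) S)
    |>.exists_pos_forall_infDist_lt_of_norm_lt hL_C1.continuous (half_pos hε)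
  refine ⟨δ / (S ^ 2 + 1), by positivity, fun lam hlam hlamδ θ hθ0 hθ => ⟨ε / 2, by linarith,
    fun t ht => ?_⟩⟩
  have hLreg : Lreg lam = fun ψ => L ψ + lam * ‖ψ‖ ^ 2 := funext (hLregdef lam)
  have hdecay : Lreg lam (θ t) ≤ Lreg lam (θ 0) :=
    antitoneOn_comp_of_hasDerivAt_neg_gradient
      (hLreg ▸ (hL_C1.add (contDiff_const.mul (contDiff_norm_sq ℝ))).differentiable one_ne_zero)
      hθ self_mem_Ici ht ht
  rw [hLregdef, hLregdef, hθ0, show L θ₀ = 0 from hθ₀, zero_add] at hdecay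
  have hlamS : lam * S ^ 2 < δ := by
    rw [lt_div_iff₀ (by positivity)] at hlamδ
    nlinarith
  have hball : θ t ∈ closedBall 0 S := by
    rw [mem_closedBall, dist_zero_right]
    refine (pow_le_pow_iff_left₀ (norm_nonneg _) (norm_nonneg _) two_ne_zero).mp ?_
    nlinarith [hL_nonneg (θ t)]
  have hsmall : ‖L (θ t)‖ < δ := by
    rw [Real.norm_of_nonneg (hL_nonneg _)]
    nlinarith [mul_nonneg hlam.le (sq_nonneg ‖θ t‖)]
  exact (hclose _ hball hsmall).le
end

section
/- Let F : ℝ^d → ℝ^{km} be continuously differentiable, y ∈ ℝ^{km}, L(θ) = ‖F(θ) − y‖², L_λ(θ) = L(θ) + λ‖θ‖² with λ > 0, and Z = {θ : L(θ) = 0}. Then every differentiable trajectory θ : [0,∞) → ℝ^d with θ(0) ∈ Z and θ′(t) = −∇L_λ(θ(t)) for all t ≥ 0 satisfies ‖θ(t)‖ ≤ ‖θ(0)‖ for all t ≥ 0. -/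
/-!
Along a gradient flow of `L_λ` the value `L_λ(θ(t))` has derivative `-‖∇L_λ(θ(t))‖² ≤ 0`, so it
never increases. Starting on the zero-loss set, `L_λ(θ(0)) = λ‖θ(0)‖²`, while
`L_λ(θ(t)) ≥ λ‖θ(t)‖²` because `L ≥ 0`; hence `λ‖θ(t)‖² ≤ λ‖θ(0)‖²`.
-/

open InnerProductSpace

section GradientFlow

variable {E : Type*} [NormedAddCommGroup E] [InnerProductSpace ℝ E] [CompleteSpace E]

theorem HasGradientAt.hasDerivAt_comp_of_hasDerivAt_neg {f : E → ℝ} {g : E} {θ : ℝ → E} {t : ℝ}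
    (hf : HasGradientAt f g (θ t)) (hθ : HasDerivAt θ (-g) t) :
    HasDerivAt (f ∘ θ) (-‖g‖ ^ 2) t := by
  simpa only [toDual_apply_apply, inner_neg_right, real_inner_self_eq_norm_sq] using
    hf.hasFDerivAt.comp_hasDerivAt t hθ

theorem antitoneOn_comp_of_gradient_flow {f : E → ℝ} (hf : Differentiable ℝ f) {θ : ℝ → E}
    {s : Set ℝ} (hs : Convex ℝ s) (hθ : ∀ t ∈ s, HasDerivAt θ (-(gradient f (θ t))) t) :
    AntitoneOn (f ∘ θ) s := by
  have hderiv : ∀ t ∈ s, HasDerivAt (f ∘ θ) (-‖gradient f (θ t)‖ ^ 2) t := fun t ht =>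
    (hf (θ t)).hasGradientAt.hasDerivAt_comp_of_hasDerivAt_neg (hθ t ht)
  refine antitoneOn_of_hasDerivWithinAt_nonpos hs
    (fun t ht => (hderiv t ht).continuousAt.continuousWithinAt)
    (fun t ht => (hderiv t (interior_subset ht)).hasDerivWithinAt) fun t _ => ?_
  exact neg_nonpos.mpr (sq_nonneg _)

end GradientFlow

theorem norm_le_norm_of_add_mul_sq_le {E : Type*} [SeminormedAddCommGroup E] {L : E → ℝ}
    {lam : ℝ} (hlam : 0 < lam) {x x₀ : E} (hx : 0 ≤ L x) (hx₀ : L x₀ = 0)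
    (h : L x + lam * ‖x‖ ^ 2 ≤ L x₀ + lam * ‖x₀‖ ^ 2) : ‖x‖ ≤ ‖x₀‖ := by
  have hsq : ‖x‖ ^ 2 ≤ ‖x₀‖ ^ 2 := le_of_mul_le_mul_left (by linarith) hlam
  exact (pow_le_pow_iff_left₀ (norm_nonneg _) (norm_nonneg _) two_ne_zero).mp hsq

/-- A gradient-flow trajectory of the regularized loss `L_λ` starting
in the zero-loss set never increases the parameter norm: `‖θ(t)‖ ≤ ‖θ(0)‖` for `t ≥ 0`. -/
theorem stmt_2 (d km : ℕ)
    (F : EuclideanSpace ℝ (Fin d) → EuclideanSpace ℝ (Fin km))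
    (hF : ContDiff ℝ 1 F)
    (y : EuclideanSpace ℝ (Fin km))
    (L : EuclideanSpace ℝ (Fin d) → ℝ)
    (hLdef : ∀ θ, L θ = ‖F θ - y‖ ^ 2)
    (lam : ℝ) (hlam : 0 < lam)
    (Lreg : EuclideanSpace ℝ (Fin d) → ℝ)
    (hLregdef : ∀ θ, Lreg θ = L θ + lam * ‖θ‖ ^ 2)
    (θ : ℝ → EuclideanSpace ℝ (Fin d))
    (hθ₀ : L (θ 0) = 0)
    (hflow : ∀ t : ℝ, 0 ≤ t → HasDerivAt θ (-(gradient Lreg (θ t))) t) :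
    ∀ t : ℝ, 0 ≤ t → ‖θ t‖ ≤ ‖θ 0‖ := by
  have hL : L = fun θ => ‖F θ - y‖ ^ 2 := funext hLdef
  have hLreg : Lreg = fun θ => L θ + lam * ‖θ‖ ^ 2 := funext hLregdef
  have hdiff : Differentiable ℝ Lreg := by
    rw [hLreg, hL]
    exact (((hF.differentiable one_ne_zero).sub_const y).norm_sq ℝ).add
      ((differentiable_id.norm_sq ℝ).const_mul lam)
  have hanti : AntitoneOn (Lreg ∘ θ) (Set.Ici 0) :=
    antitoneOn_comp_of_gradient_flow hdiff (convex_Ici 0) hflow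
  intro t ht
  have hdecay : Lreg (θ t) ≤ Lreg (θ 0) := hanti Set.self_mem_Ici ht ht
  rw [hLregdef, hLregdef] at hdecay
  exact norm_le_norm_of_add_mul_sq_le hlam (by rw [hLdef]; positivity) hθ₀ hdecay
end

section
/- Let d ≥ km, let F : ℝ^d → ℝ^{km} be twice continuously differentiable, y ∈ ℝ^{km}, L(θ) = ‖F(θ) − y‖², and Z = {θ : L(θ) = 0}. Suppose θ ∈ Z is non-singular, i.e., rank(DF(θ)) = km. Define the tangent space T_θ as the set of all v ∈ ℝ^d for which there exists a twice continuously differentiable curve s : ℝ → ℝ^d with s(0) = θ, s′(0) = v, and L(s(t)) = 0 for all t ∈ ℝ. Then T_θ = {v ∈ ℝ^d : ∇²L(θ) v = 0}, i.e., the tangent space at θ is exactly the null space of the Hessian of L at θ. -/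
/-!
Near a zero `θ` of `L = ‖F - y‖²` the gradient is `∇L = 2 (DF)† (F - y)`. Differentiating at `θ`,
the term involving the second derivative of `F` is multiplied by `F θ - y = 0`, so
`∇²L(θ) = 2 (DF θ)† (DF θ)`, whose kernel is `ker (DF θ)`. Every zero-loss curve through `θ` has
its velocity in `ker (DF θ)` since `F ∘ s` is constant. Conversely, as `DF θ` is surjective,
the implicit function theorem applied to `F` and the orthogonal projection onto `ker (DF θ)`
produces, for each `v ∈ ker (DF θ)`, a `C²` curve in the fibre `F⁻¹(y)` with velocity `v`,
defined near `0`; reparametrizing it by `t ↦ c · arctan (t / c)` makes it global.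
-/

open Filter Topology ContinuousLinearMap
open scoped ContDiff

section ProductRule

variable {𝕜 E G H : Type*} [NontriviallyNormedField 𝕜]
  [NormedAddCommGroup E] [NormedSpace 𝕜 E] [NormedAddCommGroup G] [NormedSpace 𝕜 G]
  [NormedAddCommGroup H] [NormedSpace 𝕜 H]

theorem HasFDerivAt.clm_apply_of_continuousAt_of_eq_zero {u : E → G →L[𝕜] H} {w : E → G}
    {w' : E →L[𝕜] G} {x : E} (hu : ContinuousAt u x) (hw : HasFDerivAt w w' x) (hw0 : w x = 0) :
    HasFDerivAt (fun z => u z (w z)) ((u x).comp w') x := by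
  have hsmall : (fun z => u z - u x) =o[𝓝 x] (fun _ => (1 : ℝ)) :=
    (Asymptotics.isLittleO_one_iff ℝ).2 (tendsto_sub_nhds_zero_iff.2 hu)
  have hlin : w =O[𝓝 x] fun z => z - x := by
    simpa [hw0] using hw.isBigO_sub
  have hvar : (fun z => (u z - u x) (w z)) =o[𝓝 x] fun z => z - x :=
    (isBoundedBilinearMap_apply.isBigO_comp).trans_isLittleO <| by
      simpa using hsmall.norm_left.mul_isBigO hlin.norm_norm
  refine .of_isLittleO ?_
  refine (hvar.add ((u x).isBigO_comp _ _ |>.trans_isLittleO hw.isLittleO)).congr_left fun z => ?_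
  simp [hw0, map_sub]

end ProductRule

section Gradient

variable {E G : Type*} [NormedAddCommGroup E] [InnerProductSpace ℝ E] [CompleteSpace E]
  [NormedAddCommGroup G] [InnerProductSpace ℝ G] [CompleteSpace G]

theorem HasFDerivAt.hasGradientAt_norm_sub_sq {F : E → G} {A : E →L[ℝ] G} {x : E}
    (hF : HasFDerivAt F A x) (y : G) :
    HasGradientAt (fun z => ‖F z - y‖ ^ 2) ((2 : ℝ) • adjoint A (F x - y)) x := by
  rw [hasGradientAt_iff_hasFDerivAt]
  refine (hF.sub_const y).norm_sq.congr_fderiv (ext fun w => ?_)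
  simp [adjoint_inner_left]

variable {F : E → G} {y : G} {θ : E}

theorem hasFDerivAt_gradient_norm_sub_sq (hF : ContDiff ℝ 1 F) (hθ : F θ = y) :
    HasFDerivAt (gradient fun z => ‖F z - y‖ ^ 2)
      ((2 : ℝ) • (adjoint (fderiv ℝ F θ)).comp (fderiv ℝ F θ)) θ := by
  have hFd : Differentiable ℝ F := hF.differentiable one_ne_zero
  rw [gradient_eq fun z => (hFd z).hasFDerivAt.hasGradientAt_norm_sub_sq y]
  have hadj : ContinuousAt (fun z => adjoint (fderiv ℝ F z)) θ :=
    (adjoint.continuous.comp (hF.continuous_fderiv one_ne_zero)).continuousAt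
  exact (HasFDerivAt.clm_apply_of_continuousAt_of_eq_zero hadj
    ((hFd θ).hasFDerivAt.sub_const y) (sub_eq_zero.2 hθ)).const_smul (2 : ℝ)

theorem fderiv_gradient_norm_sub_sq_apply_eq_zero_iff (hF : ContDiff ℝ 1 F) (hθ : F θ = y)
    (v : E) : fderiv ℝ (gradient fun z => ‖F z - y‖ ^ 2) θ v = 0 ↔ fderiv ℝ F θ v = 0 := by
  rw [(hasFDerivAt_gradient_norm_sub_sq hF hθ).fderiv, smul_apply, smul_eq_zero]
  simpa using SetLike.ext_iff.1 (ker_adjoint_comp_self (fderiv ℝ F θ)) v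

end Gradient

section Curves

variable {E G : Type*} [NormedAddCommGroup E] [NormedAddCommGroup G] [NormedSpace ℝ G]

theorem fderiv_apply_eq_zero_of_comp_eq_const [NormedSpace ℝ E] {F : E → G} {s : ℝ → E}
    {v : E} {t : ℝ} {c : G} (hF : DifferentiableAt ℝ F (s t)) (hs : HasDerivAt s v t)
    (hc : ∀ τ, F (s τ) = c) : fderiv ℝ F (s t) v = 0 :=
  (hF.hasFDerivAt.comp_hasDerivAt t hs).unique <| by
    simpa only [Function.comp_def, hc] using hasDerivAt_const t c

theorem exists_contDiffAt_curve_of_fderiv_apply_eq_zero [InnerProductSpace ℝ E] [CompleteSpace E]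
    [CompleteSpace G] {n : ℕ∞ω} {F : E → G} {θ v : E} (hF : ContDiffAt ℝ n F θ) (hn : n ≠ 0)
    (hsurj : (fderiv ℝ F θ).range = ⊤) (hv : fderiv ℝ F θ v = 0) :
    ∃ s : ℝ → E, ContDiffAt ℝ n s 0 ∧ s 0 = θ ∧ HasDerivAt s v 0 ∧
      ∀ᶠ t in 𝓝 0, F (s t) = F θ := by
  set K := (fderiv ℝ F θ).ker
  have : CompleteSpace K := (fderiv ℝ F θ).isClosed_ker.completeSpace_coe
  set P := K.orthogonalProjectionOnto
  have hPK : ∀ k : K, P k = k := K.orthogonalProjectionOnto_mem_subspace_eq_self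
  let φ : ImplicitFunctionData ℝ E G K :=
    { leftFun := F
      leftDeriv := fderiv ℝ F θ
      rightFun := P
      rightDeriv := P
      pt := θ
      hasStrictFDerivAt_leftFun := hF.hasStrictFDerivAt hn
      hasStrictFDerivAt_rightFun := P.hasStrictFDerivAt
      range_leftDeriv := hsurj
      range_rightDeriv := LinearMap.range_eq_top.2 fun k => ⟨k, hPK k⟩
      isCompl_ker := by
        rw [K.ker_orthogonalProjectionOnto]
        exact K.isCompl_orthogonal }
  let k : K := ⟨v, hv⟩
  let γ : ℝ → G × K := fun t => (F θ, P θ + t • k)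
  have hγ : ContDiff ℝ n γ := by fun_prop
  have hγ0 : γ 0 = φ.prodFun φ.pt := by simp [γ, φ, ImplicitFunctionData.prodFun]
  have hγ' : HasDerivAt (fun t : ℝ => P θ + t • k) k 0 := by
    simpa using ((hasDerivAt_id (0 : ℝ)).smul_const k).const_add (P θ)
  refine ⟨fun t => φ.implicitFunction.uncurry (γ t), ?_, ?_, ?_, ?_⟩
  · have := φ.contDiffAt_implicitFunction hF P.contDiff.contDiffAt hn
    rw [← hγ0] at this
    exact this.comp 0 hγ.contDiffAt
  · simpa [γ, φ] using φ.implicitFunction_apply_image.self_of_nhds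
  · have hψ := φ.hasStrictFDerivAt_implicitFunction K.subtypeL
      (ContinuousLinearMap.ext hPK) (ContinuousLinearMap.ext fun k => k.2)
    exact hψ.hasFDerivAt.comp_hasDerivAt_of_eq (0 : ℝ) hγ' (by simp [φ])
  · have hγt : Tendsto γ (𝓝 0) (𝓝 (φ.prodFun φ.pt)) := hγ0 ▸ hγ.continuous.tendsto 0
    exact hγt.eventually φ.leftFun_implicitFunction

end Curves

open Real in
theorem Real.exists_contDiff_hasDerivAt_one_mem_ball {ε : ℝ} (hε : 0 < ε) :
    ∃ φ : ℝ → ℝ, ContDiff ℝ ∞ φ ∧ φ 0 = 0 ∧ HasDerivAt φ 1 0 ∧ ∀ t, φ t ∈ Metric.ball 0 ε := by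
  -- `φ t = c · arctan (t / c)` with `c · π / 2 = ε`
  set c := 2 * ε / π
  have hc : 0 < c := by positivity
  refine ⟨fun t => c * arctan (t / c),
    contDiff_const.mul (contDiff_arctan.comp (contDiff_id.div_const c)), by simp, ?_, fun t => ?_⟩
  · have := ((hasDerivAt_id (0 : ℝ)).div_const c).arctan.const_mul c
    simpa [hc.ne'] using this
  · have hlt : |arctan (t / c)| < π / 2 :=
      abs_lt.2 ⟨neg_pi_div_two_lt_arctan _, arctan_lt_pi_div_two _⟩
    calc |c * arctan (t / c) - 0| = c * |arctan (t / c)| := by simp [abs_mul, hc.le]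
      _ < c * (π / 2) := by gcongr
      _ = ε := by simp only [c]; field_simp

theorem exists_contDiff_curve_of_contDiffAt {E : Type*} [NormedAddCommGroup E] [NormedSpace ℝ E]
    {n : ℕ} {s : ℝ → E} {v : E} {p : E → Prop} (hs : ContDiffAt ℝ n s 0) (hsv : HasDerivAt s v 0)
    (hp : ∀ᶠ t in 𝓝 0, p (s t)) :
    ∃ σ : ℝ → E, ContDiff ℝ n σ ∧ σ 0 = s 0 ∧ HasDerivAt σ v 0 ∧ ∀ t, p (σ t) := by
  obtain ⟨u, hu, hsu⟩ := hs.contDiffOn le_rfl (by simp)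
  obtain ⟨ε, hε, hball⟩ := Metric.eventually_nhds_iff_ball.1 (hp.and hu)
  obtain ⟨φ, hφ, hφ0, hφ', hφε⟩ := Real.exists_contDiff_hasDerivAt_one_mem_ball hε
  refine ⟨s ∘ φ, ?_, by simp [hφ0], ?_, fun t => (hball _ (hφε t)).1⟩
  · exact hsu.comp_contDiff (hφ.of_le (by exact_mod_cast le_top)) fun t => (hball _ (hφε t)).2
  · simpa only [one_smul] using hsv.scomp_of_eq 0 hφ' hφ0.symm

theorem stmt_8_general (d km : ℕ)
    (F : EuclideanSpace ℝ (Fin d) → EuclideanSpace ℝ (Fin km))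
    (hF : ContDiff ℝ 2 F)
    (y : EuclideanSpace ℝ (Fin km))
    (L : EuclideanSpace ℝ (Fin d) → ℝ)
    (hLdef : ∀ θ, L θ = ‖F θ - y‖ ^ 2)
    (θ : EuclideanSpace ℝ (Fin d)) (hθZ : L θ = 0)
    (hrank : Module.finrank ℝ (LinearMap.range (fderiv ℝ F θ).toLinearMap) = km) :
    {v : EuclideanSpace ℝ (Fin d) |
        ∃ s : ℝ → EuclideanSpace ℝ (Fin d),
          ContDiff ℝ 2 s ∧ s 0 = θ ∧ HasDerivAt s v 0 ∧ ∀ t : ℝ, L (s t) = 0}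
      = {v : EuclideanSpace ℝ (Fin d) | fderiv ℝ (gradient L) θ v = 0} := by
  have hL0 : ∀ x, L x = 0 ↔ F x = y := fun x => by simp [hLdef, sub_eq_zero]
  have hFθ : F θ = y := (hL0 θ).1 hθZ
  have hsurj : (fderiv ℝ F θ).range = ⊤ :=
    Submodule.eq_top_of_finrank_eq (by simpa using hrank)
  obtain rfl : L = fun x => ‖F x - y‖ ^ 2 := funext hLdef
  ext v
  rw [Set.mem_ofPred_eq, Set.mem_ofPred_eq,
    fderiv_gradient_norm_sub_sq_apply_eq_zero_iff (hF.of_le one_le_two) hFθ]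
  constructor
  · rintro ⟨s, -, hs0, hsv, hs⟩
    rw [← hs0]
    exact fderiv_apply_eq_zero_of_comp_eq_const (hF.differentiable two_ne_zero _) hsv
      fun t => (hL0 _).1 (hs t)
  · intro hv
    obtain ⟨s, hs, hs0, hsv, hsF⟩ :=
      exists_contDiffAt_curve_of_fderiv_apply_eq_zero hF.contDiffAt two_ne_zero hsurj hv
    obtain ⟨σ, hσ, hσ0, hσv, hσF⟩ :=
      exists_contDiff_curve_of_contDiffAt (n := 2) (p := (F · = F θ)) hs hsv hsF
    exact ⟨σ, hσ, hσ0.trans hs0, hσv, fun t => (hL0 _).2 ((hσF t).trans hFθ)⟩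

/-- **tangent space = null space of the Hessian.** Let `L(θ) = ‖F θ - y‖²`
with `F` twice continuously differentiable, `d ≥ km`, and let `θ` be a non-singular
zero-loss point (`L θ = 0`, Jacobian of full rank `km`). Then the set of tangent
directions at `θ` (velocities of `C²` curves through `θ` staying in the zero-loss set)
is exactly the null space of the Hessian `∇²L(θ)` (the Fréchet derivative of the
gradient of `L`). -/
theorem stmt_8 (d km : ℕ) (hd : km ≤ d)
    (F : EuclideanSpace ℝ (Fin d) → EuclideanSpace ℝ (Fin km))
    (hF : ContDiff ℝ 2 F)
    (y : EuclideanSpace ℝ (Fin km))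
    (L : EuclideanSpace ℝ (Fin d) → ℝ)
    (hLdef : ∀ θ, L θ = ‖F θ - y‖ ^ 2)
    (θ : EuclideanSpace ℝ (Fin d)) (hθZ : L θ = 0)
    (hrank : Module.finrank ℝ (LinearMap.range (fderiv ℝ F θ).toLinearMap) = km) :
    {v : EuclideanSpace ℝ (Fin d) |
        ∃ s : ℝ → EuclideanSpace ℝ (Fin d),
          ContDiff ℝ 2 s ∧ s 0 = θ ∧ HasDerivAt s v 0 ∧ ∀ t : ℝ, L (s t) = 0}
      = {v : EuclideanSpace ℝ (Fin d) | fderiv ℝ (gradient L) θ v = 0} :=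
  stmt_8_general d km F hF y L hLdef θ hθZ hrank
end

section
/- Let d ≥ km, let F : ℝ^d → ℝ^{km} be twice continuously differentiable, y ∈ ℝ^{km}, L(θ) = ‖F(θ) − y‖², and Z = {θ : L(θ) = 0}. Let S ⊂ ℝ^d be a compact set such that: every θ ∈ S admits a nearest point proj_Z(θ) in Z, every such nearest point lies in S (proj_Z(S) ⊆ S), and every φ ∈ S ∩ Z is non-singular, i.e., rank(DF(φ)) = km. Then there exists a constant C > 0 such that for every θ ∈ S \ Z, every nearest point φ = proj_Z(θ) of θ in Z, and every tangent direction v ∈ T_φ, one has |vᵀ ∇L(θ)| ≤ C · dist_Z(θ) · ‖v‖ · ‖∇L(θ)‖; equivalently, whenever v ≠ 0 and ∇L(θ) ≠ 0, the cosine of the angle between v and ∇L(θ) satisfies |cos ∠(v, ∇L(θ))| < C · dist_Z(θ). -/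
open scoped RealInnerProductSpace

/-!
Let `J = DF`. For a nearest point `φ` of `θ` in `Z` and a tangent direction `v` at `φ`,
differentiating `F ∘ s = y` gives `J φ v = 0`, so with `r = F θ - y` we get
`⟪v, ∇L θ⟫ = 2 ⟪(J θ - J φ) v, r⟫`, which is `O(‖θ - φ‖ ‖v‖ ‖r‖)` since `J` is Lipschitz on `S`.
On the other hand `∇L θ = 2 (J θ)† r`, and non-singularity on the compact set `S ∩ Z` gives a
uniform bound `c ‖r‖ ≤ ‖(J φ)† r‖`; for `‖θ - φ‖` small this persists at `θ`, so `‖r‖` is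
controlled by `‖∇L θ‖`. For `‖θ - φ‖` large, Cauchy–Schwarz already suffices.
-/

open ContinuousLinearMap

theorem HasFDerivAt.apply_eq_zero_of_comp_eq_const {E F : Type*} [NormedAddCommGroup E]
    [NormedSpace ℝ E] [NormedAddCommGroup F] [NormedSpace ℝ F] {f : E → F} {f' : E →L[ℝ] F}
    {s : ℝ → E} {v : E} {t₀ : ℝ} {c : F} (hf : HasFDerivAt f f' (s t₀)) (hs : HasDerivAt s v t₀)
    (hfs : ∀ t, f (s t) = c) : f' v = 0 := by
  have hcomp : HasDerivAt (fun t => f (s t)) (f' v) t₀ := hf.comp_hasDerivAt t₀ hs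
  simp only [hfs] at hcomp
  exact hcomp.unique (hasDerivAt_const t₀ c)

section

variable {E F : Type*} [NormedAddCommGroup E] [InnerProductSpace ℝ E] [CompleteSpace E]
  [NormedAddCommGroup F] [InnerProductSpace ℝ F] [CompleteSpace F]

theorem HasFDerivAt.hasGradientAt_norm_sq {f : E → F} {f' : E →L[ℝ] F} {x : E}
    (hf : HasFDerivAt f f' x) :
    HasGradientAt (fun x => ‖f x‖ ^ 2) (adjoint f' ((2 : ℝ) • f x)) x := by
  rw [hasGradientAt_iff_hasFDerivAt]
  refine hf.norm_sq.congr_fderiv ?_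
  ext w
  simp [adjoint_inner_left]

theorem ContinuousLinearMap.adjoint_apply_ne_zero_of_surjective {T : E →L[ℝ] F}
    (hT : Function.Surjective T) {u : F} (hu : u ≠ 0) : adjoint T u ≠ 0 := by
  intro h
  have hu' : u ∈ T.rangeᗮ := T.orthogonal_range ▸ h
  rw [LinearMap.range_eq_top.mpr hT, Submodule.top_orthogonal_eq_bot] at hu'
  exact hu hu'

theorem ContinuousLinearMap.abs_inner_adjoint_apply_le {A B : E →L[ℝ] F} {v : E} (hv : B v = 0)
    {u : F} {c δ : ℝ} (hc : 0 < c) (hu : c * ‖u‖ ≤ ‖adjoint B u‖) (hAB : ‖A - B‖ ≤ δ) :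
    |⟪v, adjoint A u⟫| ≤ 2 * δ / c * ‖v‖ * ‖adjoint A u‖ := by
  have hδ : 0 ≤ δ := (norm_nonneg _).trans hAB
  have hnum : |⟪v, adjoint A u⟫| ≤ δ * ‖v‖ * ‖u‖ := by
    have hinner : ⟪v, adjoint A u⟫ = ⟪(A - B) v, u⟫ := by
      rw [adjoint_inner_right, sub_apply, hv, sub_zero]
    calc |⟪v, adjoint A u⟫| ≤ ‖(A - B) v‖ * ‖u‖ := hinner ▸ abs_real_inner_le_norm _ _
      _ ≤ δ * ‖v‖ * ‖u‖ := by gcongr; exact (A - B).le_of_opNorm_le hAB v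
  have hden : (c - δ) * ‖u‖ ≤ ‖adjoint A u‖ := by
    have hdiff : ‖adjoint B u - adjoint A u‖ ≤ δ * ‖u‖ := by
      rw [← sub_apply, ← map_sub]
      exact (adjoint (B - A)).le_of_opNorm_le (by rwa [adjoint.norm_map, norm_sub_rev]) u
    linarith [norm_sub_norm_le (adjoint B u) (adjoint A u)]
  rcases le_or_gt δ (c / 2) with hsmall | hlarge
  · calc |⟪v, adjoint A u⟫| ≤ δ * ‖v‖ * ‖u‖ := hnum
      _ = 2 * δ / c * ‖v‖ * (c / 2 * ‖u‖) := by field_simp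
      _ ≤ 2 * δ / c * ‖v‖ * ‖adjoint A u‖ := by gcongr; nlinarith [norm_nonneg u]
  · calc |⟪v, adjoint A u⟫| ≤ 1 * ‖v‖ * ‖adjoint A u‖ := by
          rw [one_mul]; exact abs_real_inner_le_norm _ _
      _ ≤ 2 * δ / c * ‖v‖ * ‖adjoint A u‖ := by
          gcongr; rw [le_div_iff₀ hc]; linarith

theorem IsCompact.exists_pos_mul_norm_le_norm_adjoint_apply [FiniteDimensional ℝ F]
    {X : Type*} [TopologicalSpace X] {K : Set X} (hK : IsCompact K) {J : X → E →L[ℝ] F}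
    (hJ : ContinuousOn J K) (hsurj : ∀ x ∈ K, Function.Surjective (J x)) :
    ∃ c > 0, ∀ x ∈ K, ∀ u, c * ‖u‖ ≤ ‖adjoint (J x) u‖ := by
  have hcont : ContinuousOn (fun p : X × F => ‖adjoint (J p.1) p.2‖)
      (K ×ˢ Metric.sphere 0 1) :=
    ((adjoint.continuous.comp_continuousOn (hJ.comp continuousOn_fst fun _ hp => hp.1)).clm_apply
      continuousOn_snd).norm
  obtain ⟨c, hc, hbound⟩ := (hK.prod (isCompact_sphere 0 1)).exists_forall_le' hcont
    fun p hp => norm_pos_iff.mpr <| adjoint_apply_ne_zero_of_surjective (hsurj p.1 hp.1)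
      (ne_zero_of_mem_sphere one_ne_zero ⟨p.2, hp.2⟩)
  refine ⟨c, hc, fun x hx u => ?_⟩
  rcases eq_or_ne u 0 with rfl | hu
  · simp
  have hunit := hbound (x, ‖u‖⁻¹ • u) ⟨hx, by simp [norm_smul, hu]⟩
  rw [map_smul, norm_smul, norm_inv, norm_norm, le_inv_mul_iff₀ (norm_pos_iff.mpr hu),
    mul_comm] at hunit
  exact hunit

end

theorem stmt_11_general (d km : ℕ)
    (F : EuclideanSpace ℝ (Fin d) → EuclideanSpace ℝ (Fin km))
    (hF : ContDiff ℝ 2 F)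
    (y : EuclideanSpace ℝ (Fin km))
    (L : EuclideanSpace ℝ (Fin d) → ℝ)
    (hLdef : ∀ θ, L θ = ‖F θ - y‖ ^ 2)
    (Z : Set (EuclideanSpace ℝ (Fin d))) (hZ : Z = {ψ | L ψ = 0})
    (S : Set (EuclideanSpace ℝ (Fin d))) (hS : IsCompact S)
    (hproj_in : ∀ θ ∈ S, ∀ φ ∈ Z, ‖θ - φ‖ = Metric.infDist θ Z → φ ∈ S)
    (hnonsing : ∀ φ ∈ S ∩ Z,
      Module.finrank ℝ (LinearMap.range (fderiv ℝ F φ : EuclideanSpace ℝ (Fin d) →ₗ[ℝ] EuclideanSpace ℝ (Fin km))) = km) :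
    ∃ C > (0 : ℝ), ∀ θ ∈ S \ Z, ∀ φ ∈ Z, ‖θ - φ‖ = Metric.infDist θ Z →
      ∀ v : EuclideanSpace ℝ (Fin d),
        (∃ s : ℝ → EuclideanSpace ℝ (Fin d),
          ContDiff ℝ 2 s ∧ s 0 = φ ∧ HasDerivAt s v 0 ∧ ∀ t : ℝ, L (s t) = 0) →
        |⟪v, gradient L θ⟫| ≤ C * Metric.infDist θ Z * ‖v‖ * ‖gradient L θ‖ := by
  have hLy : ∀ θ, L θ = 0 ↔ F θ = y := by simp [hLdef, sub_eq_zero]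
  obtain rfl : Z = F ⁻¹' {y} := by ext; simp [hZ, hLy]
  have hFd : ∀ θ, HasFDerivAt F (fderiv ℝ F θ) θ :=
    fun θ => (hF.differentiable (by norm_num) θ).hasFDerivAt
  have hJ : ContDiff ℝ 1 (fderiv ℝ F) := hF.fderiv_right (by norm_num)
  obtain ⟨c, hc, hJc⟩ := (hS.inter_right (isClosed_singleton.preimage hF.continuous)
    ).exists_pos_mul_norm_le_norm_adjoint_apply hJ.continuous.continuousOn fun φ hφ =>
      LinearMap.range_eq_top.mp <| Submodule.eq_top_of_finrank_eq <| by
        rw [hnonsing φ hφ, finrank_euclideanSpace_fin]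
  obtain ⟨K, hK⟩ := hJ.locallyLipschitz.locallyLipschitzOn.exists_lipschitzOnWith_of_compact hS
  refine ⟨2 * (K + 1) / c, by positivity, ?_⟩
  rintro θ ⟨hθS, -⟩ _ hφZ hnear v ⟨s, -, rfl, hsv, hsL⟩
  have hgrad : gradient L θ = adjoint (fderiv ℝ F θ) ((2 : ℝ) • (F θ - y)) := by
    rw [funext hLdef]; exact ((hFd θ).sub_const y).hasGradientAt_norm_sq.gradient
  have hJv : fderiv ℝ F (s 0) v = 0 :=
    (hFd _).apply_eq_zero_of_comp_eq_const hsv fun t => (hLy _).mp (hsL t)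
  have hφS : s 0 ∈ S := hproj_in θ hθS _ hφZ hnear
  have hJθφ : ‖fderiv ℝ F θ - fderiv ℝ F (s 0)‖ ≤ (K + 1) * Metric.infDist θ (F ⁻¹' {y}) := by
    rw [← hnear]
    calc _ ≤ K * ‖θ - s 0‖ := lipschitzOnWith_iff_norm_sub_le.mp hK hθS hφS
      _ ≤ (K + 1) * ‖θ - s 0‖ := by gcongr; linarith
  rw [hgrad]
  calc _ ≤ _ := abs_inner_adjoint_apply_le hJv hc (hJc _ ⟨hφS, hφZ⟩ _) hJθφ
    _ = _ := by ring

/-- **Gradient Orthogonality.** Let `L(θ) = ‖F θ - y‖²` with `F` twice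
continuously differentiable and `d ≥ km`, let `Z` be the zero-loss set, and let
`S` be a compact set such that every point of `S` has a nearest point in `Z`, all such
nearest points lie in `S`, and every point of `S ∩ Z` is non-singular (full-rank
Jacobian). Then there is `C > 0` such that for every `θ ∈ S \ Z`, every nearest point
`φ` of `θ` in `Z`, and every tangent direction `v` at `φ`,
`|⟪v, ∇L(θ)⟫| ≤ C · dist_Z(θ) · ‖v‖ · ‖∇L(θ)‖`. -/
theorem stmt_11 (d km : ℕ) (hd : km ≤ d)
    (F : EuclideanSpace ℝ (Fin d) → EuclideanSpace ℝ (Fin km))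
    (hF : ContDiff ℝ 2 F)
    (y : EuclideanSpace ℝ (Fin km))
    (L : EuclideanSpace ℝ (Fin d) → ℝ)
    (hLdef : ∀ θ, L θ = ‖F θ - y‖ ^ 2)
    (Z : Set (EuclideanSpace ℝ (Fin d))) (hZ : Z = {ψ | L ψ = 0})
    (S : Set (EuclideanSpace ℝ (Fin d))) (hS : IsCompact S)
    (hproj_ex : ∀ θ ∈ S, ∃ φ ∈ Z, ‖θ - φ‖ = Metric.infDist θ Z)
    (hproj_in : ∀ θ ∈ S, ∀ φ ∈ Z, ‖θ - φ‖ = Metric.infDist θ Z → φ ∈ S)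
    (hnonsing : ∀ φ ∈ S ∩ Z,
      Module.finrank ℝ (LinearMap.range (fderiv ℝ F φ : EuclideanSpace ℝ (Fin d) →ₗ[ℝ] EuclideanSpace ℝ (Fin km))) = km) :
    ∃ C > (0 : ℝ), ∀ θ ∈ S \ Z, ∀ φ ∈ Z, ‖θ - φ‖ = Metric.infDist θ Z →
      ∀ v : EuclideanSpace ℝ (Fin d),
        (∃ s : ℝ → EuclideanSpace ℝ (Fin d),
          ContDiff ℝ 2 s ∧ s 0 = φ ∧ HasDerivAt s v 0 ∧ ∀ t : ℝ, L (s t) = 0) →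
        |⟪v, gradient L θ⟫| ≤ C * Metric.infDist θ Z * ‖v‖ * ‖gradient L θ‖ :=
  stmt_11_general d km F hF y L hLdef Z hZ S hS hproj_in hnonsing
end

section
/- Let X ∈ ℝ^{n×p}, Y ∈ ℝ^{n×m}, λ > 0, and let σ : ℝ → ℝ be continuously differentiable, applied entrywise to matrices. Let W₁ ∈ ℝ^{p×h} be such that H = σ(X W₁) satisfies H Hᵀ invertible. Define the cost R(W₁) = λ ‖W₁‖_F² + λ Tr( Y Yᵀ (H Hᵀ)⁻¹ ). Then R is differentiable at W₁ with gradient ∇R(W₁) = 2λ W₁ − 2λ Xᵀ [ ( (H Hᵀ)⁻¹ Y Yᵀ (H Hᵀ)⁻¹ H ) ⊙ σ′(X W₁) ], where ⊙ denotes the entrywise (Hadamard) product and σ′ is applied entrywise. -/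
/-!
The cost is a composition of maps with standard derivatives: `W ↦ X W` is linear, `σ` acts
entrywise (its derivative is the Hadamard product with `σ′(X W₁)`), `W ↦ Wᵀ W` and `H ↦ H Hᵀ`
are bilinear, and `M ↦ M⁻¹` has derivative `Δ ↦ -M⁻¹ Δ M⁻¹`. The chain rule gives the derivative
along `Δ` as `λ Tr(W₁ᵀΔ + ΔᵀW₁) - λ Tr(Y Yᵀ M⁻¹ (H Eᵀ + E Hᵀ) M⁻¹)` with `M = H Hᵀ` and
`E = (X Δ) ⊙ σ′(X W₁)`; as `M⁻¹` is symmetric, cyclicity of the trace turns this into the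
Frobenius pairing of `Δ` with the claimed gradient.
-/

open Matrix

attribute [local instance] Matrix.frobeniusNormedAddCommGroup Matrix.frobeniusNormedSpace

attribute [local instance] Matrix.frobeniusNormedRing Matrix.frobeniusNormedAlgebra

namespace Matrix

variable {k l m n : Type*} [Fintype k] [Fintype l] [Fintype m] [Fintype n]

noncomputable def mulCLM : Matrix l m ℝ →L[ℝ] Matrix m n ℝ →L[ℝ] Matrix l n ℝ :=
  (LinearMap.toContinuousLinearMap.toLinearMap ∘ₗ mulLinearMap ℝ).toContinuousLinearMap

noncomputable def transposeCLM : Matrix m n ℝ →L[ℝ] Matrix n m ℝ :=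
  (transposeLinearEquiv m n ℝ ℝ).toLinearMap.toContinuousLinearMap

noncomputable def traceCLM : Matrix n n ℝ →L[ℝ] ℝ :=
  (traceLinearMap n ℝ ℝ).toContinuousLinearMap

noncomputable def entryCLM (i : m) (j : n) : Matrix m n ℝ →L[ℝ] ℝ :=
  (entryLinearMap ℝ ℝ i j).toContinuousLinearMap

noncomputable def hadamardCLM (C : Matrix m n ℝ) : Matrix m n ℝ →L[ℝ] Matrix m n ℝ :=
  LinearMap.toContinuousLinearMap
    { toFun := (· ⊙ C)
      map_add' := fun _ _ => add_hadamard _ _ _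
      map_smul' := fun _ _ => smul_hadamard _ _ _ }

theorem hasFDerivAt_map [DecidableEq m] [DecidableEq n] {σ : ℝ → ℝ} {A : Matrix m n ℝ}
    (hσ : ∀ i j, DifferentiableAt ℝ σ (A i j)) :
    HasFDerivAt (fun B : Matrix m n ℝ => B.map σ) (hadamardCLM (A.map (deriv σ))) A := by
  have hsum : ∀ B : Matrix m n ℝ, B.map σ = ∑ i, ∑ j, σ (B i j) • single i j 1 := fun B => by
    conv_lhs => rw [matrix_eq_sum_single (B.map σ)]
    simp [smul_single]
  have hderiv : hadamardCLM (A.map (deriv σ)) =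
      ∑ i, ∑ j, (deriv σ (A i j) • entryCLM i j).smulRight (single i j (1 : ℝ)) := by
    ext Δ i' j'
    simp [hadamardCLM, entryCLM, sum_apply, single_apply, mul_comm, ite_and,
      Finset.sum_ite_eq']
  rw [funext hsum, hderiv]
  refine HasFDerivAt.fun_sum fun i _ => HasFDerivAt.fun_sum fun j _ => ?_
  exact ((hσ i j).hasDerivAt.comp_hasFDerivAt A (entryCLM i j).hasFDerivAt).smul_const _

theorem hasFDerivAt_inv [DecidableEq n] {M : Matrix n n ℝ} (hM : IsUnit M) :
    HasFDerivAt (fun N : Matrix n n ℝ => N⁻¹)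
      (-ContinuousLinearMap.mulLeftRight ℝ _ M⁻¹ M⁻¹) M := by
  have h := hasFDerivAt_ringInverse (𝕜 := ℝ) hM.unit
  rw [coe_units_inv, hM.unit_spec] at h
  rwa [show (fun N : Matrix n n ℝ => N⁻¹) = Ring.inverse from funext nonsing_inv_eq_ringInverse]

theorem trace_transpose_mul_add (W Δ : Matrix m n ℝ) :
    (Wᵀ * Δ + Δᵀ * W).trace = 2 * (Wᵀ * Δ).trace := by
  rw [trace_add, ← trace_transpose (Δᵀ * W), transpose_mul, transpose_transpose, two_mul]

theorem trace_mul_conj_mul_add_transpose {P : Matrix l l ℝ} (hP : Pᵀ = P) (Y : Matrix l k ℝ)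
    (H E : Matrix l n ℝ) :
    (Y * Yᵀ * (P * (H * Eᵀ + E * Hᵀ) * P)).trace = 2 * ((P * Y * Yᵀ * P * H)ᵀ * E).trace := by
  set K := P * Y * Yᵀ * P
  have hK : Kᵀ = K := by simp only [K, transpose_mul, transpose_transpose, hP, Matrix.mul_assoc]
  have hcycle : (Y * Yᵀ * (P * (H * Eᵀ + E * Hᵀ) * P)).trace
      = (K * (H * Eᵀ)).trace + (K * (E * Hᵀ)).trace := by
    rw [← trace_add, ← Matrix.mul_add]
    simp only [K, ← Matrix.mul_assoc]
    rw [trace_mul_comm]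
    simp only [Matrix.mul_assoc]
  have hswap : (K * (H * Eᵀ)).trace = (K * (E * Hᵀ)).trace := by
    rw [← trace_transpose, transpose_mul, transpose_mul, transpose_transpose, hK, trace_mul_comm]
  have hpair : (K * (E * Hᵀ)).trace = ((K * H)ᵀ * E).trace := by
    rw [← Matrix.mul_assoc, trace_mul_comm, transpose_mul, hK, Matrix.mul_assoc Hᵀ K E]
  rw [hcycle, hswap, hpair, two_mul]

theorem trace_transpose_mul_hadamard_mul (B C : Matrix l n ℝ) (X : Matrix l m ℝ)
    (Δ : Matrix m n ℝ) :
    (Bᵀ * ((X * Δ) ⊙ C)).trace = ((Xᵀ * (B ⊙ C))ᵀ * Δ).trace := by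
  have hpair : ∀ E : Matrix l n ℝ, (Bᵀ * (E ⊙ C)).trace = ((B ⊙ C)ᵀ * E).trace := fun E => by
    simp only [trace, diag, mul_apply, transpose_apply, hadamard_apply]
    exact Finset.sum_congr rfl fun _ _ => Finset.sum_congr rfl fun _ _ => by ring
  rw [hpair, transpose_mul, transpose_transpose, Matrix.mul_assoc]

end Matrix

theorem stmt_17_general (n p m h : ℕ)
    (X : Matrix (Fin n) (Fin p) ℝ) (Y : Matrix (Fin n) (Fin m) ℝ)
    (lam : ℝ)
    (σ : ℝ → ℝ) (hσ : ContDiff ℝ 1 σ)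
    (W₁ : Matrix (Fin p) (Fin h) ℝ)
    (hinv : IsUnit ((X * W₁).map σ * ((X * W₁).map σ)ᵀ)) :
    ∃ D : Matrix (Fin p) (Fin h) ℝ →L[ℝ] ℝ,
      HasFDerivAt (fun W : Matrix (Fin p) (Fin h) ℝ =>
          lam * (Wᵀ * W).trace
            + lam * (Y * Yᵀ * ((X * W).map σ * ((X * W).map σ)ᵀ)⁻¹).trace) D W₁ ∧
      ∀ Δ : Matrix (Fin p) (Fin h) ℝ,
        D Δ =
          ((((2 * lam) • W₁ -
              (2 * lam) • (Xᵀ *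
                Matrix.hadamard
                  (((X * W₁).map σ * ((X * W₁).map σ)ᵀ)⁻¹ * Y * Yᵀ *
                      ((X * W₁).map σ * ((X * W₁).map σ)ᵀ)⁻¹ * (X * W₁).map σ)
                  ((X * W₁).map (deriv σ))))ᵀ) * Δ).trace := by
  set H := (X * W₁).map σ
  set M := H * Hᵀ
  have hH : HasFDerivAt (fun W : Matrix (Fin p) (Fin h) ℝ => (X * W).map σ)
      (hadamardCLM ((X * W₁).map (deriv σ)) ∘L mulCLM X) W₁ :=
    (hasFDerivAt_map fun _ _ => (hσ.differentiable one_ne_zero).differentiableAt).comp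
      (f := mulCLM X) W₁ (mulCLM X).hasFDerivAt
  have hM := mulCLM.hasFDerivAt_of_bilinear hH (transposeCLM.hasFDerivAt.comp W₁ hH)
  have hgram := traceCLM.hasFDerivAt.comp W₁
    (mulCLM.hasFDerivAt_of_bilinear transposeCLM.hasFDerivAt (hasFDerivAt_id W₁))
  have hfit := (traceCLM ∘L mulCLM (Y * Yᵀ)).hasFDerivAt.comp W₁
    ((hasFDerivAt_inv hinv).comp W₁ hM)
  refine ⟨_, (hgram.const_mul lam).add (hfit.const_mul lam), fun Δ => ?_⟩
  change lam * (W₁ᵀ * Δ + Δᵀ * W₁).trace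
    + lam * (Y * Yᵀ * -(M⁻¹ * (H * ((X * Δ) ⊙ (X * W₁).map (deriv σ))ᵀ
        + (X * Δ) ⊙ (X * W₁).map (deriv σ) * Hᵀ) * M⁻¹)).trace = _
  have hP : (M⁻¹)ᵀ = M⁻¹ := by rw [transpose_nonsing_inv, transpose_mul, transpose_transpose]
  rw [Matrix.mul_neg, trace_neg, trace_transpose_mul_add, trace_mul_conj_mul_add_transpose hP,
    trace_transpose_mul_hadamard_mul, transpose_sub, transpose_smul, transpose_smul,
    Matrix.sub_mul, smul_mul, smul_mul, trace_sub, trace_smul, trace_smul, smul_eq_mul,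
    smul_eq_mul]
  ring

/-- For the first-layer cost
`R(W₁) = λ‖W₁‖_F² + λ Tr(Y Yᵀ (H Hᵀ)⁻¹)` with `H = σ(X W₁)` (σ applied entrywise,
`C¹`), at a point `W₁` where `H Hᵀ` is invertible, `R` is differentiable and its
gradient w.r.t. the Frobenius inner product is
`2λ W₁ − 2λ Xᵀ [((H Hᵀ)⁻¹ Y Yᵀ (H Hᵀ)⁻¹ H) ⊙ σ′(X W₁)]`, where `⊙` is the
Hadamard product; i.e. the derivative in a direction `Δ` is `Tr(Gᵀ Δ)` for this `G`.
(Squared Frobenius norms are written as traces.) -/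
theorem stmt_17 (n p m h : ℕ)
    (X : Matrix (Fin n) (Fin p) ℝ) (Y : Matrix (Fin n) (Fin m) ℝ)
    (lam : ℝ) (hlam : 0 < lam)
    (σ : ℝ → ℝ) (hσ : ContDiff ℝ 1 σ)
    (W₁ : Matrix (Fin p) (Fin h) ℝ)
    (hinv : IsUnit ((X * W₁).map σ * ((X * W₁).map σ)ᵀ)) :
    ∃ D : Matrix (Fin p) (Fin h) ℝ →L[ℝ] ℝ,
      HasFDerivAt (fun W : Matrix (Fin p) (Fin h) ℝ =>
          lam * (Wᵀ * W).trace
            + lam * (Y * Yᵀ * ((X * W).map σ * ((X * W).map σ)ᵀ)⁻¹).trace) D W₁ ∧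
      ∀ Δ : Matrix (Fin p) (Fin h) ℝ,
        D Δ =
          ((((2 * lam) • W₁ -
              (2 * lam) • (Xᵀ *
                Matrix.hadamard
                  (((X * W₁).map σ * ((X * W₁).map σ)ᵀ)⁻¹ * Y * Yᵀ *
                      ((X * W₁).map σ * ((X * W₁).map σ)ᵀ)⁻¹ * (X * W₁).map σ)
                  ((X * W₁).map (deriv σ))))ᵀ) * Δ).trace :=
  stmt_17_general n p m h X Y lam σ hσ W₁ hinv
end
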